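/- Let V and W be modules over the Lie algebra sl(2,ℂ), let n, m be integers, let v ∈ V satisfy h ⋅ v = n • v with (e^k ⋅ v)_{k ∈ ℕ} a ℂ-basis of V, and let w ∈ W satisfy h ⋅ w = (−m) • w with (f^k ⋅ w)_{k ∈ ℕ} a ℂ-basis of W. Equip V ⊗ W with the tensor product sl(2,ℂ)-module structure, x ⋅ (a ⊗ b) = (x ⋅ a) ⊗ b + a ⊗ (x ⋅ b). Then V ⊗ W is a cyclic module generated by v ⊗ w: the smallest sl(2,ℂ)-submodule of V ⊗ W containing v ⊗ w is V ⊗ W itself. -/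

import Mathlib

open LieAlgebra.SpecialLinear
open scoped TensorProduct

/-- The element `e = E₁₂` of `sl(2,ℂ)`. -/
noncomputable def sl2e : sl (Fin 2) ℂ := single 0 1 (by decide) (1 : ℂ)

/-- The element `f = E₂₁` of `sl(2,ℂ)`. -/
noncomputable def sl2f : sl (Fin 2) ℂ := single 1 0 (by decide) (1 : ℂ)

/-- The element `h = E₁₁ - E₂₂ = [e,f]` of `sl(2,ℂ)`. -/
noncomputable def sl2h : sl (Fin 2) ℂ := ⁅sl2e, sl2f⁆

lemma sl2_he : ⁅sl2h, sl2e⁆ = (2:ℂ) • sl2e := by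
  apply Subtype.ext
  show (sl2h.val * sl2e.val - sl2e.val * sl2h.val) = (2:ℂ) • sl2e.val
  have hh : sl2h.val = sl2e.val * sl2f.val - sl2f.val * sl2e.val := rfl
  rw [hh]
  ext i j
  fin_cases i <;> fin_cases j <;>
    simp [sl2e, sl2f, val_single, Matrix.mul_apply, Fin.sum_univ_two, Matrix.single_apply,
      Matrix.smul_apply] <;> norm_num

lemma sl2_hf : ⁅sl2h, sl2f⁆ = (-2:ℂ) • sl2f := by
  apply Subtype.ext
  show (sl2h.val * sl2f.val - sl2f.val * sl2h.val) = (-2:ℂ) • sl2f.val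
  have hh : sl2h.val = sl2e.val * sl2f.val - sl2f.val * sl2e.val := rfl
  rw [hh]
  ext i j
  fin_cases i <;> fin_cases j <;>
    simp [sl2e, sl2f, val_single, Matrix.mul_apply, Fin.sum_univ_two, Matrix.single_apply,
      Matrix.smul_apply] <;> norm_num

section Aux

variable {M : Type*} [AddCommGroup M] [Module ℂ M]
    [LieRingModule (sl (Fin 2) ℂ) M] [LieModule ℂ (sl (Fin 2) ℂ) M]

local notation "g" => sl (Fin 2) ℂ

lemma aux_comm (Y : g) (c : ℂ) (hY : ⁅sl2h, Y⁆ = c • Y) (x : M) :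
    ⁅sl2h, ⁅Y, x⁆⁆ = ⁅Y, ⁅sl2h, x⁆⁆ + c • ⁅Y, x⁆ := by
  have := leibniz_lie sl2h Y x
  rw [hY, smul_lie] at this
  rw [this]; abel

lemma aux_EF (x : M) :
    ⁅sl2e, ⁅sl2f, x⁆⁆ = ⁅sl2f, ⁅sl2e, x⁆⁆ + ⁅sl2h, x⁆ := by
  have := leibniz_lie sl2e sl2f x
  rw [show ⁅sl2e, sl2f⁆ = sl2h from rfl] at this
  rw [this]; abel

lemma aux_H_pow (Y : g) (c : ℂ) (hY : ⁅sl2h, Y⁆ = c • Y)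
    (w : M) (lam : ℂ) (hw : ⁅sl2h, w⁆ = lam • w) (k : ℕ) :
    ⁅sl2h, ((LieModule.toEnd ℂ (sl (Fin 2) ℂ) M Y) ^ k) w⁆
      = (lam + c * k) • ((LieModule.toEnd ℂ (sl (Fin 2) ℂ) M Y) ^ k) w := by
  induction k with
  | zero => simpa using hw
  | succ k ih =>
    rw [pow_succ']
    simp only [Module.End.mul_apply, LieModule.toEnd_apply_apply]
    rw [aux_comm Y c hY, ih, lie_smul]
    push_cast
    module

/-- The "opposite" generator kills a vector which generates a string basis. -/
lemma aux_kill (Y X : g) (c : ℂ) (hc : c ≠ 0)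
    (hY : ⁅sl2h, Y⁆ = c • Y) (hX : ⁅sl2h, X⁆ = (-c) • X)
    (w : M) (lam : ℂ) (hw : ⁅sl2h, w⁆ = lam • w)
    (B : Module.Basis ℕ ℂ M)
    (hB : ∀ k : ℕ, B k = ((LieModule.toEnd ℂ (sl (Fin 2) ℂ) M Y) ^ k) w) :
    ⁅X, w⁆ = 0 := by
  set x := ⁅X, w⁆ with hx
  have hxe : ⁅sl2h, x⁆ = (lam - c) • x := by
    rw [hx, aux_comm X (-c) hX, hw, lie_smul]
    module
  -- repr of h action on basis
  have key : ∀ k : ℕ, ∀ y : M, B.repr ⁅sl2h, y⁆ k = (lam + c * k) * B.repr y k := by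
    intro k
    have : ((Finsupp.lapply k : (ℕ →₀ ℂ) →ₗ[ℂ] ℂ) ∘ₗ (B.repr : M →ₗ[ℂ] (ℕ →₀ ℂ))
        ∘ₗ (LieModule.toEnd ℂ (sl (Fin 2) ℂ) M sl2h))
        = (lam + c * k) • ((Finsupp.lapply k : (ℕ →₀ ℂ) →ₗ[ℂ] ℂ)
        ∘ₗ (B.repr : M →ₗ[ℂ] (ℕ →₀ ℂ))) := by
      apply Module.Basis.ext (b := B)
      intro j
      simp only [LinearMap.comp_apply, LinearMap.smul_apply, LieModule.toEnd_apply_apply,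
        LinearEquiv.coe_coe, Finsupp.lapply_apply]
      rw [hB j, aux_H_pow Y c hY w lam hw j, map_smul, ← hB j]
      rcases eq_or_ne j k with h | h
      · subst h; simp
      · simp [Finsupp.single_apply, B.repr_self, h, Finsupp.smul_apply]
    intro y
    have := congrArg (fun L => L y) this
    simpa using this
  have hzero : ∀ k : ℕ, B.repr x k = 0 := by
    intro k
    have h1 := key k x
    rw [hxe, map_smul] at h1
    have : (lam - c) * B.repr x k = (lam + c * k) * B.repr x k := by simpa using h1
    have h2 : (c * (k + 1)) * B.repr x k = 0 := by linear_combination -this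
    have h3 : (c : ℂ) * (k + 1) ≠ 0 := by
      apply mul_ne_zero hc
      have : ((k+1 : ℕ) : ℂ) ≠ 0 := Nat.cast_ne_zero.mpr (Nat.succ_ne_zero k)
      push_cast at this; exact this
    exact (mul_eq_zero.mp h2).resolve_left h3
  have h0 : B.repr x = 0 := Finsupp.ext hzero
  exact (LinearEquiv.map_eq_zero_iff B.repr).mp h0

/-- lowering formula: X applied to Y^(j+1) w is a multiple of Y^j w. -/
lemma aux_lower (Y X : g) (c eps : ℂ)
    (hY : ⁅sl2h, Y⁆ = c • Y)
    (hXY : ∀ x : M, ⁅X, ⁅Y, x⁆⁆ = ⁅Y, ⁅X, x⁆⁆ + eps • ⁅sl2h, x⁆)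
    (w : M) (lam : ℂ) (hw : ⁅sl2h, w⁆ = lam • w) (hkill : ⁅X, w⁆ = 0) (j : ℕ) :
    ∃ cj : ℂ, ⁅X, ((LieModule.toEnd ℂ (sl (Fin 2) ℂ) M Y) ^ (j+1)) w⁆
      = cj • ((LieModule.toEnd ℂ (sl (Fin 2) ℂ) M Y) ^ j) w := by
  induction j with
  | zero =>
    refine ⟨eps * lam, ?_⟩
    simp only [zero_add, pow_one, pow_zero, Module.End.one_apply, LieModule.toEnd_apply_apply]
    rw [hXY w, hkill, hw]
    simp [lie_smul, smul_smul]
  | succ j ih =>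
    obtain ⟨cj, hcj⟩ := ih
    refine ⟨cj + eps * (lam + c * (j+1)), ?_⟩
    rw [pow_succ']
    simp only [Module.End.mul_apply, LieModule.toEnd_apply_apply]
    rw [hXY, hcj, aux_H_pow Y c hY w lam hw (j+1), lie_smul, smul_smul]
    rw [show ((LieModule.toEnd ℂ (sl (Fin 2) ℂ) M Y) ^ (j+1)) w
      = ⁅Y, ((LieModule.toEnd ℂ (sl (Fin 2) ℂ) M Y) ^ j) w⁆ by
        rw [pow_succ']; simp [LieModule.toEnd_apply_apply]]
    push_cast
    module

end Aux

/-- If `v` generates `V` freely under `e` with `h ⋅ v = n • v`, and `w` generates `W` freely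
under `f` with `h ⋅ w = (-m) • w`, then `V ⊗ W` (with the diagonal action) is generated, as an
`sl(2,ℂ)`-module, by the single vector `v ⊗ w`. -/
theorem tensor_cyclic
    (V : Type*) [AddCommGroup V] [Module ℂ V]
    [LieRingModule (sl (Fin 2) ℂ) V] [LieModule ℂ (sl (Fin 2) ℂ) V]
    (W : Type*) [AddCommGroup W] [Module ℂ W]
    [LieRingModule (sl (Fin 2) ℂ) W] [LieModule ℂ (sl (Fin 2) ℂ) W]
    (n m : ℤ) (v : V) (w : W)
    (hv : ⁅sl2h, v⁆ = n • v)
    (Bv : Module.Basis ℕ ℂ V)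
    (hBv : ∀ k : ℕ, Bv k = ((LieModule.toEnd ℂ (sl (Fin 2) ℂ) V sl2e) ^ k) v)
    (hw : ⁅sl2h, w⁆ = (-m) • w)
    (Bw : Module.Basis ℕ ℂ W)
    (hBw : ∀ k : ℕ, Bw k = ((LieModule.toEnd ℂ (sl (Fin 2) ℂ) W sl2f) ^ k) w) :
    LieSubmodule.lieSpan ℂ (sl (Fin 2) ℂ) {v ⊗ₜ[ℂ] w} = (⊤ : LieSubmodule ℂ (sl (Fin 2) ℂ) (V ⊗[ℂ] W)) := by
  set S := LieSubmodule.lieSpan ℂ (sl (Fin 2) ℂ) {v ⊗ₜ[ℂ] w} with hS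
  set Ev := LieModule.toEnd ℂ (sl (Fin 2) ℂ) V sl2e with hEv
  set Fw := LieModule.toEnd ℂ (sl (Fin 2) ℂ) W sl2f with hFw
  have hv' : ⁅sl2h, v⁆ = (n : ℂ) • v := by
    rw [hv]; norm_num [Int.cast_smul_eq_zsmul]
  have hw' : ⁅sl2h, w⁆ = ((-m : ℤ) : ℂ) • w := by
    rw [hw]; norm_num [Int.cast_smul_eq_zsmul]
  -- f kills v, e kills w
  have hfv : ⁅sl2f, v⁆ = 0 :=
    aux_kill sl2e sl2f (2:ℂ) two_ne_zero sl2_he (by rw [sl2_hf]) v (n:ℂ) hv' Bv hBv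
  have hew : ⁅sl2e, w⁆ = 0 :=
    aux_kill sl2f sl2e (-2:ℂ) (by norm_num) sl2_hf (by rw [sl2_he]; norm_num) w ((-m : ℤ):ℂ) hw' Bw hBw
  -- lowering lemmas
  have lowerW : ∀ j : ℕ, ∃ c : ℂ, ⁅sl2e, (Fw ^ (j+1)) w⁆ = c • (Fw ^ j) w :=
    aux_lower sl2f sl2e (-2:ℂ) 1 sl2_hf
      (fun x => by rw [aux_EF x]; all_goals module) w _ hw' hew
  have lowerV : ∀ i : ℕ, ∃ c : ℂ, ⁅sl2f, (Ev ^ (i+1)) v⁆ = c • (Ev ^ i) v :=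
    aux_lower sl2e sl2f (2:ℂ) (-1) sl2_he
      (fun x => by rw [aux_EF x]; all_goals module) v _ hv' hfv
  -- main induction
  have main : ∀ N : ℕ, ∀ i j : ℕ, i + j ≤ N → ((Ev ^ i) v) ⊗ₜ[ℂ] ((Fw ^ j) w) ∈ S := by
    intro N
    induction N with
    | zero =>
      intro i j hij
      obtain ⟨hi, hj⟩ : i = 0 ∧ j = 0 := by omega
      subst hi; subst hj
      simpa using LieSubmodule.subset_lieSpan (R := ℂ) (L := sl (Fin 2) ℂ) (s := {v ⊗ₜ[ℂ] w}) rfl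
    | succ N ih =>
      intro i j hij
      rcases Nat.lt_or_ge (i + j) (N + 1) with h | h
      · exact ih i j (by omega)
      have hij' : i + j = N + 1 := by omega
      rcases i with _ | i'
      · -- i = 0, j = N+1
        have hj : j = N + 1 := by omega
        subst hj
        have hmem : v ⊗ₜ[ℂ] ((Fw ^ N) w) ∈ S := by
          simpa using ih 0 N (by omega)
        have := S.lie_mem (x := sl2f) hmem
        rw [TensorProduct.LieModule.lie_tmul_right] at this
        rw [hfv] at this
        simp only [TensorProduct.zero_tmul, zero_add] at this
        have heq : ⁅sl2f, (Fw ^ N) w⁆ = (Fw ^ (N+1)) w := by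
          rw [pow_succ']; simp [hFw, LieModule.toEnd_apply_apply]
        rw [heq] at this
        simpa using this
      · -- i = i'+1
        have hmem : ((Ev ^ i') v) ⊗ₜ[ℂ] ((Fw ^ j) w) ∈ S := ih i' j (by omega)
        have hbr := S.lie_mem (x := sl2e) hmem
        rw [TensorProduct.LieModule.lie_tmul_right] at hbr
        have heq : ⁅sl2e, (Ev ^ i') v⁆ = (Ev ^ (i'+1)) v := by
          rw [pow_succ']; simp [hEv, LieModule.toEnd_apply_apply]
        rw [heq] at hbr
        rcases j with _ | j'
        · rw [pow_zero] at hbr ⊢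
          simp only [Module.End.one_apply] at hbr ⊢
          rw [hew] at hbr
          simpa using hbr
        · obtain ⟨c, hc⟩ := lowerW j'
          rw [hc] at hbr
          have hmem2 : ((Ev ^ i') v) ⊗ₜ[ℂ] (c • (Fw ^ j') w) ∈ S := by
            rw [TensorProduct.tmul_smul]
            exact S.smul_mem c (ih i' j' (by omega))
          have := S.sub_mem hbr hmem2
          simpa using this
  -- conclude
  rw [eq_top_iff]
  intro x _
  have hx : x ∈ Submodule.span ℂ (Set.range (Bv.tensorProduct Bw)) := by
    rw [(Bv.tensorProduct Bw).span_eq]; trivial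
  have hle : Submodule.span ℂ (Set.range (Bv.tensorProduct Bw)) ≤ S.toSubmodule := by
    rw [Submodule.span_le]
    rintro y ⟨⟨i, j⟩, rfl⟩
    have : (Bv.tensorProduct Bw) (i, j) = (Bv i) ⊗ₜ[ℂ] (Bw j) := Module.Basis.tensorProduct_apply Bv Bw i j
    rw [this, hBv i, hBw j]
    exact main (i + j) i j le_rfl
  exact hle hx
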